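/- Let G be a connected simple graph on a finite nonempty vertex set V, and let d be the diameter of G, i.e., the maximum over all pairs u, v ∈ V of the graph distance (length of a shortest path) between u and v. Then for every nonempty subset T ⊆ V with |T| = S, there exists a connected subgraph H of G whose vertex set contains T and whose edge set has cardinality at most d·(S − 1). -/

import Mathlib

/-!
Fix a root `r ∈ T` and join it to every other terminal by a shortest path. The union of these
`|T| - 1` paths is connected, contains `T`, and each path has at most `diam G` edges.
-/

namespace SimpleGraph

variable {V : Type*} {G : SimpleGraph V}

lemma Walk.ncard_edgeSet_le_length {u v : V} (p : G.Walk u v) : p.edgeSet.ncard ≤ p.length := by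
  classical
  rw [← p.coe_edges_toFinset, Set.ncard_coe_finset, ← p.length_edges]
  exact p.edges.toFinset_card_le

lemma Connected.exists_connected_subgraph_ncard_edgeSet_le_sum_dist (hG : G.Connected) (r : V)
    (T : Finset V) :
    ∃ H : G.Subgraph, H.Connected ∧ insert r (T : Set V) ⊆ H.verts ∧
      H.edgeSet.ncard ≤ ∑ v ∈ T, G.dist r v := by
  classical
  induction T using Finset.induction_on with
  | empty =>
    exact ⟨G.singletonSubgraph r, Subgraph.singletonSubgraph_connected, by simp, by simp⟩
  | insert a T ha ih =>
    obtain ⟨H, hH, hTH, hcard⟩ := ih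
    obtain ⟨p, hp⟩ := hG.exists_walk_length_eq_dist r a
    have hrH : r ∈ H.verts := hTH (Set.mem_insert r _)
    refine ⟨H ⊔ p.toSubgraph, Subgraph.connected_sup hH.preconnected
      p.toSubgraph_connected.preconnected ⟨r, hrH, p.start_mem_verts_toSubgraph⟩, ?_, ?_⟩
    · rw [Finset.coe_insert, Set.insert_comm, Set.insert_subset_iff]
      exact ⟨Or.inr p.end_mem_verts_toSubgraph, hTH.trans le_sup_left⟩
    · rw [Subgraph.edgeSet_sup, Finset.sum_insert ha, add_comm]
      calc (H.edgeSet ∪ p.toSubgraph.edgeSet).ncard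
          ≤ H.edgeSet.ncard + p.toSubgraph.edgeSet.ncard := Set.ncard_union_le _ _
        _ ≤ ∑ v ∈ T, G.dist r v + G.dist r a := by
          rw [p.edgeSet_toSubgraph, ← hp]
          exact add_le_add hcard p.ncard_edgeSet_le_length

lemma Connected.dist_le_diam [Finite V] (hG : G.Connected) (u v : V) : G.dist u v ≤ G.diam :=
  have := hG.nonempty
  G.dist_le_diam (connected_iff_ediam_ne_top.mp hG)

end SimpleGraph

theorem bell_pair_subset_upper_bound {V : Type*} [Fintype V]
    (G : SimpleGraph V) (hG : G.Connected)
    (T : Finset V) (hT : T.Nonempty) (S : ℕ) (hS : T.card = S) :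
    ∃ H : G.Subgraph, H.Connected ∧ ↑T ⊆ H.verts ∧
      H.edgeSet.ncard ≤ G.diam * (S - 1) := by
  classical
  obtain ⟨r, hr⟩ := hT
  obtain ⟨H, hH, hTH, hcard⟩ :=
    hG.exists_connected_subgraph_ncard_edgeSet_le_sum_dist r (T.erase r)
  refine ⟨H, hH, ?_, ?_⟩
  · rwa [Finset.coe_erase, Set.insert_sdiff_singleton, Set.insert_eq_of_mem hr] at hTH
  · calc H.edgeSet.ncard ≤ ∑ v ∈ T.erase r, G.dist r v := hcard
      _ ≤ (T.erase r).card * G.diam :=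
        Finset.sum_le_card_nsmul _ _ _ fun v _ ↦ hG.dist_le_diam r v
      _ = G.diam * (S - 1) := by rw [Finset.card_erase_of_mem hr, hS, mul_comm]
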